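/- arXiv:1304.1690 — 4 statements merged into one kernel-verified Lean document; each statement's English description precedes it below -/
import Mathlib

section
/- Let k > 0 satisfy k ≥ √(Q/c³) · √(max_{x∈[c,d]} |(k/2)(x² − cd) + V_c − ((V_d − V_c)/(d − c))·c|), where Q = max_{x∈[c,d]} q(x). Then the quadratic function α₂(x) = (k/2)x² + ((V_d − V_c)/(d − c) − (k/2)(d + c))·x + (k/2)cd + V_c − ((V_d − V_c)/(d − c))·c satisfies α₂(c) = V_c, α₂(d) = V_d, and α₂''(x) + H(x, α₂(x), α₂'(x)) ≥ 0 for all x ∈ [c,d]; i.e., α₂ is a lower solution of the Dirichlet problem. -/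
/-!
`α₂` is the quadratic with `α₂'' = k` through `(c, V_c)` and `(d, V_d)`, so the claim reduces to
`H(x, α₂, α₂') ≥ -k`, which holds as soon as `q(x) |x α₂' - α₂| ≤ k² x³`. Writing
`u(x) = (k/2)(x² - cd)` and `v = V_c - L c` with `L = (V_d - V_c)/(d - c)`, we have
`x α₂' - α₂ = u(x) - v`, while the hypothesis on `k` controls `S = max |u + v|` over `[c, d]`
through `Q S ≤ k² c³`. Now `v - u(x) ≤ u(d) + v`, and `u(x) - v ≤ -(u(c) + v) + (k/2)(x - c)²`
with `(k/4)(x² - c²) ≤ S`; together these give `|u(x) - v| c³ ≤ S x³`, and `q ≤ Q` finishes.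
-/

open Real Set

theorem hasDerivAt_quadratic (a b e y : ℝ) :
    HasDerivAt (fun x => a * x ^ 2 + b * x + e) (2 * a * y + b) y :=
  ((((hasDerivAt_pow 2 y).const_mul a).add ((hasDerivAt_id' y).const_mul b)).add_const
    e).congr_deriv (by ring)

theorem deriv_quadratic (a b e : ℝ) :
    deriv (fun x => a * x ^ 2 + b * x + e) = fun y => 2 * a * y + b :=
  funext fun y => (hasDerivAt_quadratic a b e y).deriv

theorem deriv_deriv_quadratic (a b e : ℝ) :
    deriv (deriv (fun x => a * x ^ 2 + b * x + e)) = fun _ => 2 * a := by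
  rw [deriv_quadratic]
  funext y
  simp

theorem mul_le_sq_mul_of_sqrt_div_mul_sqrt_le {a b c k : ℝ} (hc : 0 < c) (hb : 0 ≤ b)
    (h : √(a / c) * √b ≤ k) : a * b ≤ k ^ 2 * c := by
  rw [← sqrt_mul' _ hb, sqrt_le_iff, div_mul_eq_mul_div, div_le_iff₀ hc] at h
  exact h.2

theorem mul_le_of_mul_le_of_mul_le {q Q w S K c X : ℝ} (hc : 0 < c) (hK : 0 ≤ K) (hX : 0 ≤ X)
    (hw : 0 ≤ w) (hqQ : q ≤ Q) (hwS : w * c ≤ S * X) (hQS : Q * S ≤ K * c) : q * w ≤ K * X := by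
  rcases le_or_gt q 0 with hq | hq
  · exact (mul_nonpos_of_nonpos_of_nonneg hq hw).trans (mul_nonneg hK hX)
  refine le_of_mul_le_mul_right ?_ hc
  calc q * w * c ≤ Q * (w * c) := by rw [mul_assoc]; gcongr
    _ ≤ Q * (S * X) := mul_le_mul_of_nonneg_left hwS (hq.le.trans hqQ)
    _ = Q * S * X := by ring
    _ ≤ K * c * X := mul_le_mul_of_nonneg_right hQS hX
    _ = K * X * c := by ring

namespace LowerSolution

noncomputable def H (p q : ℝ → ℝ) (x y z : ℝ) : ℝ :=
  (p x * x ^ 2 - √(p x ^ 2 * x ^ 4 + 4 * x ^ 3 * q x * |x * z - y|)) / (2 * x ^ 3)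

theorem neg_le_H {p q : ℝ → ℝ} {x y z k : ℝ} (hx : 0 < x) (hp : 0 ≤ p x) (hk : 0 ≤ k)
    (h : q x * |x * z - y| ≤ k ^ 2 * x ^ 3) : -k ≤ H p q x y z := by
  have hsqrt :
      √(p x ^ 2 * x ^ 4 + 4 * x ^ 3 * q x * |x * z - y|) ≤ 2 * k * x ^ 3 + p x * x ^ 2 := by
    rw [sqrt_le_left (by positivity)]
    nlinarith [mul_le_mul_of_nonneg_left h (by positivity : (0:ℝ) ≤ 4 * x ^ 3),
      mul_nonneg (mul_nonneg hk hp) (pow_nonneg hx.le 5)]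
  rw [H, le_div_iff₀ (by positivity)]
  linarith

theorem abs_sub_mul_cube_le {c d x k v S : ℝ} (hc : 0 < c) (hx : x ∈ Icc c d) (hk : 0 ≤ k)
    (hS : ∀ t ∈ Icc c d, |k / 2 * (t ^ 2 - c * d) + v| ≤ S) :
    |k / 2 * (x ^ 2 - c * d) - v| * c ^ 3 ≤ S * x ^ 3 := by
  obtain ⟨hcx, hxd⟩ := hx
  have hcd := hcx.trans hxd
  obtain ⟨hSc, -⟩ := abs_le.mp (hS c ⟨le_rfl, hcd⟩)
  obtain ⟨-, hSx⟩ := abs_le.mp (hS x ⟨hcx, hxd⟩)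
  obtain ⟨-, hSd⟩ := abs_le.mp (hS d ⟨hcd, le_rfl⟩)
  have hlower : v - k / 2 * (x ^ 2 - c * d) ≤ S := by
    nlinarith [mul_nonneg hk (sq_nonneg (d - c)),
      mul_nonneg hk (sub_nonneg.2 (mul_self_le_mul_self hc.le hcx))]
  have hupper : k / 2 * (x ^ 2 - c * d) - v ≤ S + k / 2 * (x - c) ^ 2 := by
    nlinarith [mul_nonneg hk (mul_nonneg hc.le (sub_nonneg.2 hxd))]
  have hgap : k / 4 * (x ^ 2 - c ^ 2) ≤ S := by linarith
  have hcubic : k / 2 * (x - c) ^ 2 * c ^ 3 ≤ S * (x ^ 3 - c ^ 3) :=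
    calc k / 2 * (x - c) ^ 2 * c ^ 3 = k / 4 * (x - c) ^ 2 * (2 * c ^ 3) := by ring
      _ ≤ k / 4 * (x - c) ^ 2 * ((x + c) * (x ^ 2 + x * c + c ^ 2)) := by
        refine mul_le_mul_of_nonneg_left ?_ (by positivity)
        nlinarith [mul_le_mul hcx hcx hc.le (hc.le.trans hcx)]
      _ = k / 4 * (x ^ 2 - c ^ 2) * (x ^ 3 - c ^ 3) := by ring
      _ ≤ S * (x ^ 3 - c ^ 3) := by
        gcongr
        exact sub_nonneg.2 (pow_le_pow_left₀ hc.le hcx 3)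
  calc |k / 2 * (x ^ 2 - c * d) - v| * c ^ 3 ≤ (S + k / 2 * (x - c) ^ 2) * c ^ 3 := by
        gcongr
        exact abs_le.2 ⟨by nlinarith [sq_nonneg (x - c)], hupper⟩
    _ ≤ S * x ^ 3 := by linarith

end LowerSolution

theorem stmt_4_general (c d Vc Vd Q k : ℝ) (hc : 0 < c) (hcd : c < d) (p q : ℝ → ℝ)
    (hp : ∀ x ∈ Set.Icc c d, 0 ≤ p x)
    (hQ : IsGreatest (q '' Set.Icc c d) Q)
    (hkk : k ≥ Real.sqrt (Q / c ^ 3) *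
      Real.sqrt (sSup ((fun x => |k / 2 * (x ^ 2 - c * d) + Vc - (Vd - Vc) / (d - c) * c|) ''
        Set.Icc c d))) :
    (fun x => k / 2 * x ^ 2 + ((Vd - Vc) / (d - c) - k / 2 * (d + c)) * x +
        k / 2 * (c * d) + Vc - (Vd - Vc) / (d - c) * c) c = Vc ∧
    (fun x => k / 2 * x ^ 2 + ((Vd - Vc) / (d - c) - k / 2 * (d + c)) * x +
        k / 2 * (c * d) + Vc - (Vd - Vc) / (d - c) * c) d = Vd ∧
    ∀ x ∈ Set.Icc c d,
      deriv (deriv (fun x => k / 2 * x ^ 2 + ((Vd - Vc) / (d - c) - k / 2 * (d + c)) * x +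
        k / 2 * (c * d) + Vc - (Vd - Vc) / (d - c) * c)) x +
        (p x * x ^ 2 - Real.sqrt ((p x) ^ 2 * x ^ 4 +
          4 * x ^ 3 * q x *
            |x * deriv (fun x => k / 2 * x ^ 2 + ((Vd - Vc) / (d - c) - k / 2 * (d + c)) * x +
              k / 2 * (c * d) + Vc - (Vd - Vc) / (d - c) * c) x -
             (k / 2 * x ^ 2 + ((Vd - Vc) / (d - c) - k / 2 * (d + c)) * x +
              k / 2 * (c * d) + Vc - (Vd - Vc) / (d - c) * c)|)) / (2 * x ^ 3) ≥ 0 := by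
  have hk : 0 ≤ k := (mul_nonneg (sqrt_nonneg _) (sqrt_nonneg _)).trans hkk
  set L := (Vd - Vc) / (d - c) with hL
  set S := sSup ((fun x => |k / 2 * (x ^ 2 - c * d) + Vc - L * c|) '' Icc c d)
  set α := fun x => k / 2 * x ^ 2 + (L - k / 2 * (d + c)) * x + k / 2 * (c * d) + Vc - L * c
  have hα : α = fun x =>
      k / 2 * x ^ 2 + (L - k / 2 * (d + c)) * x + (k / 2 * (c * d) + Vc - L * c) := by
    funext x; ring
  have hα' : ∀ x, x * deriv α x - α x = k / 2 * (x ^ 2 - c * d) - (Vc - L * c) := fun x => by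
    rw [hα, deriv_quadratic]; ring
  have hα'' : deriv (deriv α) = fun _ => k := by
    rw [hα, deriv_deriv_quadratic]; funext; ring
  have hdc : d - c ≠ 0 := sub_ne_zero.2 hcd.ne'
  refine ⟨by ring, by simp only [α, hL]; field_simp; ring, fun x hx => ?_⟩
  have hS : ∀ t ∈ Icc c d, |k / 2 * (t ^ 2 - c * d) + (Vc - L * c)| ≤ S := fun t ht => by
    rw [← add_sub_assoc]
    exact ContinuousOn.le_sSup_image_Icc (f := fun x => |k / 2 * (x ^ 2 - c * d) + Vc - L * c|)
      (by fun_prop) ht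
  have hQS : Q * S ≤ k ^ 2 * c ^ 3 :=
    mul_le_sq_mul_of_sqrt_div_mul_sqrt_le (by positivity)
      ((abs_nonneg _).trans (hS c ⟨le_rfl, hcd.le⟩)) hkk
  have hx₀ : 0 < x := hc.trans_le hx.1
  have hqw : q x * |x * deriv α x - α x| ≤ k ^ 2 * x ^ 3 := by
    rw [hα']
    exact mul_le_of_mul_le_of_mul_le (by positivity) (sq_nonneg k) (by positivity) (abs_nonneg _)
      (hQ.2 ⟨x, hx, rfl⟩) (LowerSolution.abs_sub_mul_cube_le hc hx hk hS) hQS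
  have hH := LowerSolution.neg_le_H hx₀ (hp x hx) hk hqw
  show deriv (deriv α) x + LowerSolution.H p q x (α x) (deriv α x) ≥ 0
  rw [hα'']
  linarith

theorem stmt_4 (c d Vc Vd Q k : ℝ) (hc : 0 < c) (hcd : c < d) (p q : ℝ → ℝ)
    (hp : ∀ x ∈ Set.Icc c d, 0 ≤ p x) (hq : ∀ x ∈ Set.Icc c d, 0 ≤ q x)
    (hpc : ContinuousOn p (Set.Icc c d)) (hqc : ContinuousOn q (Set.Icc c d))
    (hQ : IsGreatest (q '' Set.Icc c d) Q)
    (hk : 0 < k)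
    (hkk : k ≥ Real.sqrt (Q / c ^ 3) *
      Real.sqrt (sSup ((fun x => |k / 2 * (x ^ 2 - c * d) + Vc - (Vd - Vc) / (d - c) * c|) ''
        Set.Icc c d))) :
    (fun x => k / 2 * x ^ 2 + ((Vd - Vc) / (d - c) - k / 2 * (d + c)) * x +
        k / 2 * (c * d) + Vc - (Vd - Vc) / (d - c) * c) c = Vc ∧
    (fun x => k / 2 * x ^ 2 + ((Vd - Vc) / (d - c) - k / 2 * (d + c)) * x +
        k / 2 * (c * d) + Vc - (Vd - Vc) / (d - c) * c) d = Vd ∧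
    ∀ x ∈ Set.Icc c d,
      deriv (deriv (fun x => k / 2 * x ^ 2 + ((Vd - Vc) / (d - c) - k / 2 * (d + c)) * x +
        k / 2 * (c * d) + Vc - (Vd - Vc) / (d - c) * c)) x +
        (p x * x ^ 2 - Real.sqrt ((p x) ^ 2 * x ^ 4 +
          4 * x ^ 3 * q x *
            |x * deriv (fun x => k / 2 * x ^ 2 + ((Vd - Vc) / (d - c) - k / 2 * (d + c)) * x +
              k / 2 * (c * d) + Vc - (Vd - Vc) / (d - c) * c) x -
             (k / 2 * x ^ 2 + ((Vd - Vc) / (d - c) - k / 2 * (d + c)) * x +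
              k / 2 * (c * d) + Vc - (Vd - Vc) / (d - c) * c)|)) / (2 * x ^ 3) ≥ 0 :=
  stmt_4_general c d Vc Vd Q k hc hcd p q hp hQ hkk
end

section
/- Let V be a C² solution of V''(x) + H(x,V(x),V'(x)) = 0 on [c,d] with V(d) = V_d and V'(d) ≤ V_d/d. Then x·V'(x) − V(x) ≤ 0 for all x ∈ [c,d]. -/
/-! Since `H ≤ 0`, the equation gives `V'' ≥ 0`. As `(x V' - V)' = x V''`, the function
`x V' - V` is nondecreasing on `[c, d]`, and at `x = d` it is `≤ 0` by the boundary condition. -/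

open Set

lemma Real.sub_sqrt_sq_add_nonpos (a : ℝ) {b : ℝ} (hb : 0 ≤ b) : a - √(a ^ 2 + b) ≤ 0 := by
  have : a ≤ √(a ^ 2 + b) :=
    calc a ≤ |a| := le_abs_self a
      _ = √(a ^ 2) := (Real.sqrt_sq_eq_abs a).symm
      _ ≤ √(a ^ 2 + b) := Real.sqrt_le_sqrt (by linarith)
  linarith

lemma hamiltonian_nonpos {x q : ℝ} (p w : ℝ) (hx : 0 < x) (hq : 0 ≤ q) :
    (p * x ^ 2 - √(p ^ 2 * x ^ 4 + 4 * x ^ 3 * q * |w|)) / (2 * x ^ 3) ≤ 0 := by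
  rw [show p ^ 2 * x ^ 4 = (p * x ^ 2) ^ 2 by ring]
  exact div_nonpos_of_nonpos_of_nonneg
    (Real.sub_sqrt_sq_add_nonpos _ (by positivity)) (by positivity)

lemma hasDerivAt_mul_deriv_sub {f : ℝ → ℝ} {x : ℝ} (hf : DifferentiableAt ℝ f x)
    (hf' : DifferentiableAt ℝ (deriv f) x) :
    HasDerivAt (fun y => y * deriv f y - f y) (x * deriv (deriv f) x) x :=
  (((hasDerivAt_id' x).mul hf'.hasDerivAt).sub hf.hasDerivAt).congr_deriv (by ring)

lemma monotoneOn_mul_deriv_sub {f : ℝ → ℝ} (hf : ContDiff ℝ 2 f) {a b : ℝ} (ha : 0 ≤ a)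
    (hf'' : ∀ x ∈ Ioo a b, 0 ≤ deriv (deriv f) x) :
    MonotoneOn (fun y => y * deriv f y - f y) (Icc a b) := by
  have hdiff : Differentiable ℝ f := hf.differentiable (by norm_num)
  have hdiff' : Differentiable ℝ (deriv f) :=
    ((contDiff_succ_iff_deriv (n := 1)).mp hf).2.2.differentiable one_ne_zero
  have hderiv x := hasDerivAt_mul_deriv_sub (hdiff x) (hdiff' x)
  refine monotoneOn_of_deriv_nonneg (convex_Icc a b)
    (HasDerivAt.continuousOn fun x _ => hderiv x)
    (fun x _ => (hderiv x).differentiableAt.differentiableWithinAt) fun x hx => ?_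
  rw [interior_Icc] at hx
  rw [(hderiv x).deriv]
  exact mul_nonneg (ha.trans hx.1.le) (hf'' x hx)

theorem stmt_9_general (c d Vd : ℝ) (hc : 0 < c) (p q : ℝ → ℝ)
    (hq : ∀ x ∈ Set.Icc c d, 0 ≤ q x)
    (V : ℝ → ℝ) (hV : ContDiff ℝ 2 V)
    (hsol : ∀ x ∈ Set.Icc c d,
      deriv (deriv V) x +
        (p x * x ^ 2 - Real.sqrt ((p x) ^ 2 * x ^ 4 +
          4 * x ^ 3 * q x * |x * deriv V x - V x|)) / (2 * x ^ 3) = 0)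
    (hVd : V d = Vd) (hVd' : deriv V d ≤ Vd / d) :
    ∀ x ∈ Set.Icc c d, x * deriv V x - V x ≤ 0 := by
  intro x hx
  have hd : 0 < d := hc.trans_le (hx.1.trans hx.2)
  have hconvex : ∀ y ∈ Ioo c d, 0 ≤ deriv (deriv V) y := fun y hy => by
    have hy := Ioo_subset_Icc_self hy
    linarith [hsol y hy,
      hamiltonian_nonpos (p y) (y * deriv V y - V y) (hc.trans_le hy.1) (hq y hy)]
  have hend : d * deriv V d - V d ≤ 0 := by
    rw [hVd, sub_nonpos, mul_comm, ← le_div_iff₀ hd]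
    exact hVd'
  exact (monotoneOn_mul_deriv_sub hV hc.le hconvex hx ⟨hx.1.trans hx.2, le_rfl⟩ hx.2).trans hend

theorem stmt_9 (c d Vd : ℝ) (hc : 0 < c) (hcd : c ≤ d) (p q : ℝ → ℝ)
    (hp : ∀ x ∈ Set.Icc c d, 0 ≤ p x) (hq : ∀ x ∈ Set.Icc c d, 0 ≤ q x)
    (V : ℝ → ℝ) (hV : ContDiff ℝ 2 V)
    (hsol : ∀ x ∈ Set.Icc c d,
      deriv (deriv V) x +
        (p x * x ^ 2 - Real.sqrt ((p x) ^ 2 * x ^ 4 +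
          4 * x ^ 3 * q x * |x * deriv V x - V x|)) / (2 * x ^ 3) = 0)
    (hVd : V d = Vd) (hVd' : deriv V d ≤ Vd / d) :
    ∀ x ∈ Set.Icc c d, x * deriv V x - V x ≤ 0 :=
  stmt_9_general c d Vd hc p q hq V hV hsol hVd hVd'
end

section
/- Let V be a C² convex solution (V'' ≥ 0) of the stationary Black–Scholes equation x³·V''(x)² + p(x)·x²·V''(x) + q(x)·(x·V'(x) − V(x)) = 0 on [c,d], where q(x) > 0 for all x. Then x·V'(x) − V(x) ≤ 0 on [c,d] and V satisfies V''(x) + H(x,V(x),V'(x)) = 0 for all x ∈ [c,d]. -/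
theorem stmt_11 (c d : ℝ) (hc : 0 < c) (hcd : c ≤ d) (p q : ℝ → ℝ)
    (hp : ∀ x ∈ Set.Icc c d, 0 ≤ p x) (hq : ∀ x ∈ Set.Icc c d, 0 < q x)
    (hqb : ∃ M, ∀ x ∈ Set.Icc c d, q x ≤ M)
    (V : ℝ → ℝ) (hV : ContDiff ℝ 2 V)
    (hconv : ∀ x ∈ Set.Icc c d, 0 ≤ deriv (deriv V) x)
    (hbs : ∀ x ∈ Set.Icc c d,
      x ^ 3 * (deriv (deriv V) x) ^ 2 + p x * x ^ 2 * deriv (deriv V) x +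
        q x * (x * deriv V x - V x) = 0) :
    (∀ x ∈ Set.Icc c d, x * deriv V x - V x ≤ 0) ∧
    (∀ x ∈ Set.Icc c d,
      deriv (deriv V) x +
        (p x * x ^ 2 - Real.sqrt ((p x) ^ 2 * x ^ 4 +
          4 * x ^ 3 * q x * |x * deriv V x - V x|)) / (2 * x ^ 3) = 0) := by
  have key : ∀ x ∈ Set.Icc c d, x * deriv V x - V x ≤ 0 := by
    intro x hx
    have hx0 : 0 < x := lt_of_lt_of_le hc hx.1
    have hw := hconv x hx
    have hpx := hp x hx
    have hqx := hq x hx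
    have hb := hbs x hx
    have hqe : q x * (x * deriv V x - V x) =
        -(x ^ 3 * (deriv (deriv V) x) ^ 2 + p x * x ^ 2 * deriv (deriv V) x) := by
      linarith
    have hnn : 0 ≤ x ^ 3 * (deriv (deriv V) x) ^ 2 + p x * x ^ 2 * deriv (deriv V) x := by
      have := sq_nonneg (deriv (deriv V) x)
      positivity
    have : q x * (x * deriv V x - V x) ≤ 0 := by rw [hqe]; linarith
    exact nonpos_of_mul_nonpos_right (by linarith [mul_comm (q x) (x * deriv V x - V x)]) hqx
  refine ⟨key, ?_⟩
  intro x hx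
  have hx0 : 0 < x := lt_of_lt_of_le hc hx.1
  have hw := hconv x hx
  have hpx := hp x hx
  have hqx := hq x hx
  have hb := hbs x hx
  have he := key x hx
  have habs : |x * deriv V x - V x| = -(x * deriv V x - V x) := abs_of_nonpos he
  have harg : (p x) ^ 2 * x ^ 4 + 4 * x ^ 3 * q x * |x * deriv V x - V x| =
      (p x * x ^ 2 + 2 * x ^ 3 * deriv (deriv V) x) ^ 2 := by
    rw [habs]
    have hqe : q x * (x * deriv V x - V x) =
        -(x ^ 3 * (deriv (deriv V) x) ^ 2 + p x * x ^ 2 * deriv (deriv V) x) := by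
      linarith
    have : 4 * x ^ 3 * (q x * (x * deriv V x - V x)) =
        4 * x ^ 3 * (-(x ^ 3 * (deriv (deriv V) x) ^ 2 + p x * x ^ 2 * deriv (deriv V) x)) := by
      rw [hqe]
    nlinarith [this]
  rw [harg, Real.sqrt_sq (by positivity)]
  have hx3 : (2 : ℝ) * x ^ 3 ≠ 0 := by positivity
  field_simp
  ring
end

section
/- Let h : ℝ → ℝ and a ≤ b with h(a) ≤ 0 ≤ h(b), and suppose that for all x ∈ [a,b], liminf_{z→x⁻} h(z) ≥ h(x) ≥ limsup_{z→x⁺} h(z). Then there exist c₁, c₂ ∈ [a,b] with h(c₁) = 0 = h(c₂) such that every zero c ∈ [a,b] of h satisfies c₁ ≤ c ≤ c₂; i.e., h has a least and a greatest zero in [a,b]. -/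
/-!
The semicontinuity condition says that negativity of `h` propagates a little to the right and
positivity a little to the left. Hence at `c = inf {x ∈ [a,b] | h x ≥ 0}` the function can be
neither negative (the set would start later) nor positive (it would be positive just left of `c`,
where it is negative), and every point of `[a,c)` is negative, so `c` is the least zero.
The greatest zero is the same argument in the order dual.
-/

open Filter Set Topology

namespace Real

variable {ι : Type*} {F : Filter ι} {f : ι → ℝ} {c : ℝ}

/- Without boundedness, `limsup` and `liminf` take the junk value `sInf ∅ = sSup ∅ = 0`;
the sign condition on `c` rules that case out. -/
theorem eventually_lt_of_limsup_lt_of_nonpos (hc : c ≤ 0) (h : limsup f F < c) :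
    ∀ᶠ x in F, f x < c := by
  by_cases hf : F.IsBoundedUnder (· ≤ ·) f
  · exact eventually_lt_of_limsup_lt h hf
  · have hempty : {a | ∀ᶠ x in F, f x ≤ a} = ∅ :=
      eq_empty_iff_forall_notMem.2 fun a ha => hf ⟨a, ha⟩
    rw [limsup_eq, hempty, sInf_empty] at h
    exact absurd h hc.not_gt

theorem eventually_lt_of_lt_liminf_of_nonneg (hc : 0 ≤ c) (h : c < liminf f F) :
    ∀ᶠ x in F, c < f x := by
  by_cases hf : F.IsBoundedUnder (· ≥ ·) f
  · exact eventually_lt_of_lt_liminf h hf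
  · have hempty : {a | ∀ᶠ x in F, a ≤ f x} = ∅ :=
      eq_empty_iff_forall_notMem.2 fun a ha => hf ⟨a, ha⟩
    rw [liminf_eq, hempty, sSup_empty] at h
    exact absurd h hc.not_gt

end Real

section IntermediateValue

variable {α : Type*} [ConditionallyCompleteLinearOrder α] [TopologicalSpace α] [OrderTopology α]
  [DenselyOrdered α] {N P : Set α} {a b : α}

theorem exists_isLeast_Icc_diff_notMem (hab : a ≤ b) (ha : a ∉ P) (hb : b ∉ N)
    (hNP : Disjoint N P) (hN : ∀ x ∈ Icc a b, x ∈ N → N ∈ 𝓝[>] x)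
    (hP : ∀ x ∈ Icc a b, x ∈ P → P ∈ 𝓝[<] x) :
    ∃ c, IsLeast (Icc a b \ N) c ∧ c ∉ P := by
  set S := Icc a b \ N
  have hbS : b ∈ S := ⟨right_mem_Icc.2 hab, hb⟩
  have hS : BddBelow S := ⟨a, fun x hx => hx.1.1⟩
  have hglb : IsGLB S (sInf S) := isGLB_csInf ⟨b, hbS⟩ hS
  set c := sInf S
  have hac : a ≤ c := le_csInf ⟨b, hbS⟩ fun x hx => hx.1.1
  have hcb : c ≤ b := csInf_le hS hbS
  have hc : c ∈ Icc a b := ⟨hac, hcb⟩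
  have hbelow : ∀ x ∈ Ico a c, x ∈ N := fun x hx => by
    by_contra hxN
    exact (csInf_le hS ⟨⟨hx.1, hx.2.le.trans hcb⟩, hxN⟩).not_gt hx.2
  have hcN : c ∉ N := by
    intro hcN
    have hcb' : c < b := hcb.lt_of_ne fun h => hb (h ▸ hcN)
    obtain ⟨u, hcu, hu⟩ := (mem_nhdsGT_iff_exists_Ioo_subset' hcb').1 (hN c hc hcN)
    obtain ⟨s, hsS, hcs, hsu⟩ := hglb.exists_between' (fun h => h.2 hcN) hcu
    exact hsS.2 (hu ⟨hcs, hsu⟩)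
  refine ⟨c, ⟨⟨hc, hcN⟩, fun x hx => csInf_le hS hx⟩, fun hcP => ?_⟩
  have hac' : a < c := hac.lt_of_ne fun h => ha (h ▸ hcP)
  have : (𝓝[<] c).NeBot := nhdsLT_neBot_of_exists_lt ⟨a, hac'⟩
  obtain ⟨x, hxP, hx⟩ := Filter.nonempty_of_mem (inter_mem (hP c hc hcP) (Ioo_mem_nhdsLT hac'))
  exact hNP.notMem_of_mem_right hxP (hbelow x (Ioo_subset_Ico_self hx))

theorem exists_isGreatest_Icc_diff_notMem (hab : a ≤ b) (ha : a ∉ P) (hb : b ∉ N)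
    (hNP : Disjoint N P) (hN : ∀ x ∈ Icc a b, x ∈ N → N ∈ 𝓝[>] x)
    (hP : ∀ x ∈ Icc a b, x ∈ P → P ∈ 𝓝[<] x) :
    ∃ c, IsGreatest (Icc a b \ P) c ∧ c ∉ N := by
  obtain ⟨c, hc, hcN⟩ := exists_isLeast_Icc_diff_notMem (α := αᵒᵈ) (N := P) (P := N)
    (a := OrderDual.toDual b) (b := OrderDual.toDual a) hab hb ha hNP.symm
    (fun x hx => hP x ⟨hx.2, hx.1⟩) (fun x hx => hN x ⟨hx.2, hx.1⟩)
  refine ⟨OrderDual.ofDual c, ?_, hcN⟩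
  rw [Icc_toDual] at hc
  exact hc

end IntermediateValue

theorem stmt_19 (a b : ℝ) (hab : a ≤ b) (h : ℝ → ℝ)
    (ha : h a ≤ 0) (hb : 0 ≤ h b)
    (hsemi : ∀ x ∈ Set.Icc a b,
      Filter.liminf h (nhdsWithin x (Set.Iio x)) ≥ h x ∧
      h x ≥ Filter.limsup h (nhdsWithin x (Set.Ioi x))) :
    ∃ c₁ ∈ Set.Icc a b, ∃ c₂ ∈ Set.Icc a b,
      h c₁ = 0 ∧ h c₂ = 0 ∧
      ∀ c ∈ Set.Icc a b, h c = 0 → c₁ ≤ c ∧ c ≤ c₂ := by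
  set N := {x | h x < 0}
  set P := {x | 0 < h x}
  have hNP : Disjoint N P := disjoint_left.2 fun x (hneg : h x < 0) hpos => hneg.not_gt hpos
  have hN : ∀ x ∈ Icc a b, x ∈ N → N ∈ 𝓝[>] x := fun x hx hneg =>
    Real.eventually_lt_of_limsup_lt_of_nonpos le_rfl ((hsemi x hx).2.trans_lt hneg)
  have hP : ∀ x ∈ Icc a b, x ∈ P → P ∈ 𝓝[<] x := fun x hx hpos =>
    Real.eventually_lt_of_lt_liminf_of_nonneg le_rfl (hpos.trans_le (hsemi x hx).1)
  obtain ⟨c₁, ⟨⟨hc₁, hc₁N⟩, hc₁least⟩, hc₁P⟩ :=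
    exists_isLeast_Icc_diff_notMem hab ha.not_gt hb.not_gt hNP hN hP
  obtain ⟨c₂, ⟨⟨hc₂, hc₂P⟩, hc₂greatest⟩, hc₂N⟩ :=
    exists_isGreatest_Icc_diff_notMem hab ha.not_gt hb.not_gt hNP hN hP
  refine ⟨c₁, hc₁, c₂, hc₂, le_antisymm (not_lt.1 hc₁P) (not_lt.1 hc₁N),
    le_antisymm (not_lt.1 hc₂P) (not_lt.1 hc₂N), fun c hc hc0 => ⟨?_, ?_⟩⟩
  · exact hc₁least ⟨hc, fun h' => h'.ne hc0⟩
  · exact hc₂greatest ⟨hc, fun h' => h'.ne' hc0⟩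
end
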